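/- Let (V, B) be a KS set from an orthogonal representation of J(N,2) in dimension N−1 (N odd, N ≥ 5), with bases b₁,...,b_N. Then for any four distinct indices i,j,k,ℓ, the pair (S_A, S_B) with S_A = B \ {b_i, b_j} and S_B = B \ {b_k, b_ℓ} is a bipartite KS set: no classical assignment exists for (S_A, S_B). -/

import Mathlib

/-!
Points of the `J(N,2)` configuration are the pairs `{a, b} ⊆ [N]`, and a classical assignment
chooses on each line `i` a point containing `i`, any two chosen points being equal or disjoint.
For `N` odd no assignment on all lines exists, since the chosen points would partition `[N]`
into pairs.

Given an assignment `(F, G)` of `(B \ {bᵢ, bⱼ}, B \ {bₖ, bₗ})`, two points `F a`, `F b` sharing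
an element are equal: either both are `{k, l}`, or one contains some `y ∉ {k, l}` and then both
equal `G y`. So `F` and, symmetrically, `G` are consistent among themselves, and since
`{i, j}` and `{k, l}` are disjoint, gluing `F` and `G` gives an assignment of all of `B`.
-/

/-- `p` is a point on line `i` of the `J(N,2)`-configuration. -/
def PointOn (N i : ℕ) (p : Finset ℕ) : Prop :=
  ∃ j ∈ Finset.Icc 1 N, j ≠ i ∧ p = {i, j}

/-- A classical assignment for the pair of sets of lines (bases) `(SA, SB)`. -/
def HasClassicalAssignment (N : ℕ) (SA SB : Finset ℕ) : Prop :=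
  ∃ F G : ℕ → Finset ℕ,
    (∀ i ∈ SA, PointOn N i (F i)) ∧
    (∀ k ∈ SB, PointOn N k (G k)) ∧
    (∀ i ∈ SA, ∀ k ∈ SB, F i = G k ∨ Disjoint (F i) (G k))

open Finset

section Compatible

variable {α : Type*}

def Compatible (p q : Finset α) : Prop :=
  p = q ∨ Disjoint p q

theorem Compatible.symm {p q : Finset α} (h : Compatible p q) : Compatible q p :=
  h.imp Eq.symm fun h => h.symm

theorem Compatible.eq_of_mem {p q : Finset α} {x : α} (h : Compatible p q) (hp : x ∈ p)
    (hq : x ∈ q) : p = q :=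
  h.resolve_right (not_disjoint_iff.2 ⟨x, hp, hq⟩)

/-- A family of pairwise compatible pairs `H a ∋ a` covering `U` is a perfect matching of `U`. -/
theorem even_card_of_pairwise_compatible [DecidableEq α] {U : Finset α} {H : α → Finset α}
    (hmem : ∀ a ∈ U, a ∈ H a) (hsub : ∀ a ∈ U, H a ⊆ U) (hcard : ∀ a ∈ U, (H a).card = 2)
    (hH : ∀ a ∈ U, ∀ b ∈ U, Compatible (H a) (H b)) : Even U.card := by
  have hcover : (U.image H).biUnion id = U := by
    ext x
    simp only [mem_biUnion, mem_image, id]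
    exact ⟨fun ⟨_, ⟨a, ha, hae⟩, hx⟩ => hsub a ha (hae ▸ hx),
      fun hx => ⟨H x, ⟨x, hx, rfl⟩, hmem x hx⟩⟩
  have hdisj : (U.image H : Set (Finset α)).PairwiseDisjoint id := by
    rintro _ hp _ hq hpq
    obtain ⟨a, ha, rfl⟩ := mem_image.1 hp
    obtain ⟨b, hb, rfl⟩ := mem_image.1 hq
    exact (hH a ha b hb).resolve_left hpq
  have hblocks : ∀ p ∈ U.image H, (id p).card = 2 := by
    simp only [mem_image, id]
    rintro _ ⟨a, ha, rfl⟩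
    exact hcard a ha
  rw [← hcover, card_biUnion hdisj, sum_const_nat hblocks]
  exact even_two.mul_left _

theorem compatible_of_forall_compatible [DecidableEq α] {U : Finset α} {k l : α}
    {G : α → Finset α} (hG : ∀ m ∈ U \ {k, l}, m ∈ G m) {p q : Finset α} (hp : p.card = 2)
    (hq : q.card = 2) (hpU : p ⊆ U) (hqU : q ⊆ U)
    (hpG : ∀ m ∈ U \ {k, l}, Compatible p (G m)) (hqG : ∀ m ∈ U \ {k, l}, Compatible q (G m)) :
    Compatible p q := by
  wlog hpkl : ¬ p ⊆ {k, l} generalizing p q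
  · by_cases hqkl : q ⊆ {k, l}
    · have hpair : ∀ r : Finset α, r.card = 2 → r ⊆ {k, l} → r = {k, l} := fun r hr hrkl =>
        eq_of_subset_of_card_le hrkl (card_le_two.trans hr.ge)
      exact Or.inl ((hpair p hp (not_not.1 hpkl)).trans (hpair q hq hqkl).symm)
    · exact (this hq hp hqU hpU hqG hpG hqkl).symm
  refine or_iff_not_imp_right.2 fun hpq => ?_
  obtain ⟨x, hxp, hxq⟩ := not_disjoint_iff.1 hpq
  obtain ⟨y, hyp, hykl⟩ := not_subset.1 hpkl
  have hy : y ∈ U \ {k, l} := mem_sdiff.2 ⟨hpU hyp, hykl⟩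
  have hpy : p = G y := (hpG y hy).eq_of_mem hyp (hG y hy)
  exact hpy.trans ((hqG y hy).eq_of_mem hxq (hpy ▸ hxp)).symm

variable {ι : Type*} [DecidableEq ι]

theorem compatible_piecewise {S T U : Finset ι} {F G : ι → Finset α} (hU : U ⊆ S ∪ T)
    (hF : ∀ a ∈ S, ∀ b ∈ S, Compatible (F a) (F b))
    (hG : ∀ a ∈ T, ∀ b ∈ T, Compatible (G a) (G b))
    (hFG : ∀ a ∈ S, ∀ b ∈ T, Compatible (F a) (G b)) :
    ∀ a ∈ U, ∀ b ∈ U, Compatible (S.piecewise F G a) (S.piecewise F G b) := by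
  have hT : ∀ x ∈ U, x ∉ S → x ∈ T := fun x hx hxS => (mem_union.1 (hU hx)).resolve_left hxS
  intro a ha b hb
  by_cases haS : a ∈ S <;> by_cases hbS : b ∈ S <;>
    simp only [piecewise_eq_of_mem, piecewise_eq_of_notMem, haS, hbS, not_false_eq_true]
  · exact hF a haS b hbS
  · exact hFG a haS b (hT b hb hbS)
  · exact (hFG b hbS a (hT a ha haS)).symm
  · exact hG a (hT a ha haS) b (hT b hb hbS)

end Compatible

theorem PointOn.mem_self {N i : ℕ} {p : Finset ℕ} (h : PointOn N i p) : i ∈ p := by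
  obtain ⟨j, -, -, rfl⟩ := h
  exact mem_insert_self i {j}

theorem PointOn.card_eq_two {N i : ℕ} {p : Finset ℕ} (h : PointOn N i p) : p.card = 2 := by
  obtain ⟨j, -, hji, rfl⟩ := h
  exact card_pair hji.symm

theorem PointOn.subset_Icc {N i : ℕ} {p : Finset ℕ} (hi : i ∈ Icc 1 N) (h : PointOn N i p) :
    p ⊆ Icc 1 N := by
  obtain ⟨j, hj, -, rfl⟩ := h
  exact insert_subset hi (singleton_subset_iff.2 hj)

theorem not_hasClassicalAssignment_Icc_Icc {N : ℕ} (hN : Odd N) :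
    ¬ HasClassicalAssignment N (Icc 1 N) (Icc 1 N) := by
  rintro ⟨F, G, hF, hG, hFG⟩
  have hFG_eq : ∀ a ∈ Icc 1 N, F a = G a := fun a ha =>
    Compatible.eq_of_mem (hFG a ha a ha) (hF a ha).mem_self (hG a ha).mem_self
  have hEven : Even (Icc 1 N).card :=
    even_card_of_pairwise_compatible (fun a ha => (hF a ha).mem_self)
      (fun a ha => (hF a ha).subset_Icc ha) (fun a ha => (hF a ha).card_eq_two)
      (fun a ha b hb => hFG_eq b hb ▸ hFG a ha b hb)
  rw [Nat.card_Icc, Nat.add_sub_cancel] at hEven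
  exact Nat.not_even_iff_odd.2 hN hEven

theorem pairwise_compatible_of_compatible_Icc_sdiff_pair {N k l : ℕ} {SA : Finset ℕ}
    (hSA : SA ⊆ Icc 1 N)
    {F G : ℕ → Finset ℕ} (hF : ∀ a ∈ SA, PointOn N a (F a))
    (hG : ∀ b ∈ Icc 1 N \ {k, l}, PointOn N b (G b))
    (hFG : ∀ a ∈ SA, ∀ b ∈ Icc 1 N \ {k, l}, Compatible (F a) (G b)) :
    ∀ a ∈ SA, ∀ b ∈ SA, Compatible (F a) (F b) := fun a ha b hb =>
  compatible_of_forall_compatible (fun m hm => (hG m hm).mem_self) (hF a ha).card_eq_two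
    (hF b hb).card_eq_two ((hF a ha).subset_Icc (hSA ha)) ((hF b hb).subset_Icc (hSA hb))
    (hFG a ha) (hFG b hb)

theorem HasClassicalAssignment.of_sdiff_pair {N i j k l : ℕ}
    (hdisj : Disjoint ({i, j} : Finset ℕ) {k, l})
    (h : HasClassicalAssignment N (Icc 1 N \ {i, j}) (Icc 1 N \ {k, l})) :
    HasClassicalAssignment N (Icc 1 N) (Icc 1 N) := by
  obtain ⟨F, G, hF, hG, hFG⟩ := h
  have hcover : Icc 1 N ⊆ (Icc 1 N \ {i, j}) ∪ (Icc 1 N \ {k, l}) := by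
    have h := sdiff_inf (a := Icc 1 N) (b := {i, j}) (c := {k, l})
    rw [hdisj.eq_bot, sdiff_bot] at h
    exact h.le
  have hFF := pairwise_compatible_of_compatible_Icc_sdiff_pair sdiff_subset hF hG hFG
  have hGG := pairwise_compatible_of_compatible_Icc_sdiff_pair sdiff_subset hG hF
    fun b hb a ha => Compatible.symm (hFG a ha b hb)
  have hH : ∀ a ∈ Icc 1 N, PointOn N a ((Icc 1 N \ {i, j}).piecewise F G a) := by
    intro a ha
    by_cases haA : a ∈ Icc 1 N \ {i, j}
    · rw [piecewise_eq_of_mem _ _ _ haA]; exact hF a haA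
    · rw [piecewise_eq_of_notMem _ _ _ haA]
      exact hG a ((mem_union.1 (hcover ha)).resolve_left haA)
  exact ⟨_, _, hH, hH, compatible_piecewise hcover hFF hGG hFG⟩

theorem disjoint_pair_pair_of_card_eq_four {α : Type*} [DecidableEq α] {i j k l : α}
    (h : ({i, j, k, l} : Finset α).card = 4) : Disjoint ({i, j} : Finset α) {k, l} := by
  have hunion : ({i, j} : Finset α) ∪ {k, l} = {i, j, k, l} := by
    simp only [insert_union, singleton_union]
  have hle := card_union_le ({i, j} : Finset α) {k, l}
  rw [hunion, h] at hle
  rw [← card_union_eq_card_add_card, hunion, h]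
  have := card_le_two (a := i) (b := j)
  have := card_le_two (a := k) (b := l)
  omega

theorem bipartite_KS_of_four_distinct_general (N : ℕ) (hN : Odd N)
    (i j k l : ℕ)
    (hdist : ({i, j, k, l} : Finset ℕ).card = 4) :
    ¬ HasClassicalAssignment N (Finset.Icc 1 N \ {i, j})
      (Finset.Icc 1 N \ {k, l}) :=
  fun h => not_hasClassicalAssignment_Icc_Icc hN (h.of_sdiff_pair
    (disjoint_pair_pair_of_card_eq_four hdist))

/-- For `N` odd, `N ≥ 5`, and any four distinct indices `i, j, k, l` of bases,
the pair `(B \ {bᵢ, bⱼ}, B \ {bₖ, bₗ})` is a bipartite KS set: it admits no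
classical assignment. -/
theorem bipartite_KS_of_four_distinct (N : ℕ) (hN : Odd N) (hN5 : 5 ≤ N)
    (i j k l : ℕ) (hi : i ∈ Finset.Icc 1 N) (hj : j ∈ Finset.Icc 1 N)
    (hk : k ∈ Finset.Icc 1 N) (hl : l ∈ Finset.Icc 1 N)
    (hdist : ({i, j, k, l} : Finset ℕ).card = 4) :
    ¬ HasClassicalAssignment N (Finset.Icc 1 N \ {i, j})
      (Finset.Icc 1 N \ {k, l}) :=
  bipartite_KS_of_four_distinct_general N hN i j k l hdist
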